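/- arXiv:2507.05036 — 4 statements merged into one kernel-verified Lean document; each statement's English description precedes it below -/
import Mathlib

section
/- Let q : Fin 3 → ℂ. The matrix A = (uΞ q) * (uΞ q)ᴴ is Hermitian, and every eigenvalue of A (in the sense of Matrix.IsHermitian.eigenvalues) equals ‖q 0‖² + ‖q 1‖² + ‖q 2‖². Consequently, every singular value of uΞ q equals the Euclidean norm of q. -/
open scoped Matrix

noncomputable section

/-- The 3×9 matrix gain representing the nonlinear advection term `u·∇u`:
`(uΞ q) i (i', j) = if i = i' then -(q j) else 0`. -/
def uΞ (q : Fin 3 → ℂ) : Matrix (Fin 3) (Fin 3 × Fin 3) ℂ :=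
  fun i p => if i = p.1 then -(q p.2) else 0

namespace Matrix.IsHermitian

variable {𝕜 n : Type*} [RCLike 𝕜] [Fintype n] [DecidableEq n] {A : Matrix n n 𝕜}

theorem eigenvalues_eq_of_eq_algebraMap (hA : A.IsHermitian) {c : ℝ}
    (hc : A = algebraMap ℝ (Matrix n n 𝕜) c) (i : n) : hA.eigenvalues i = c := by
  have : Nonempty n := ⟨i⟩
  simpa [hc, spectrum.scalar_eq] using hA.eigenvalues_mem_spectrum_real i

end Matrix.IsHermitian

theorem uΞ_mul_conjTranspose (q : Fin 3 → ℂ) :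
    uΞ q * (uΞ q)ᴴ = algebraMap ℝ (Matrix (Fin 3) (Fin 3) ℂ) (∑ j, ‖q j‖ ^ 2) := by
  ext i k
  simp only [uΞ, Matrix.mul_apply, Matrix.conjTranspose_apply, Fintype.sum_prod_type,
    Matrix.algebraMap_matrix_apply]
  by_cases h : i = k
  · subst h
    simp [Complex.mul_conj, Complex.sq_norm]
  · simp [h, Ne.symm h]

theorem uXi_eigenvalues_and_singular_values (q : Fin 3 → ℂ) :
    ((uΞ q) * (uΞ q)ᴴ).IsHermitian ∧
      ∀ (hA : ((uΞ q) * (uΞ q)ᴴ).IsHermitian) (i : Fin 3),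
        hA.eigenvalues i = ‖q 0‖ ^ 2 + ‖q 1‖ ^ 2 + ‖q 2‖ ^ 2 ∧
        Real.sqrt (hA.eigenvalues i) =
          Real.sqrt (‖q 0‖ ^ 2 + ‖q 1‖ ^ 2 + ‖q 2‖ ^ 2) := by
  refine ⟨Matrix.isHermitian_mul_conjTranspose_self _, fun hA i => ?_⟩
  have heig : hA.eigenvalues i = ‖q 0‖ ^ 2 + ‖q 1‖ ^ 2 + ‖q 2‖ ^ 2 := by
    rw [hA.eigenvalues_eq_of_eq_algebraMap (uΞ_mul_conjTranspose q), Fin.sum_univ_three]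
  exact ⟨heig, congrArg Real.sqrt heig⟩
end
end

section
/- Let n and m be finite types with decidable equality, let M : Matrix n m ℂ and Δ : Matrix m n ℂ. If the matrix 1 - M * Δ is not invertible (equivalently det (1 - M * Δ) = 0), then 1 ≤ ‖M‖ * ‖Δ‖ (L2 operator norms); equivalently, every destabilizing uncertainty Δ satisfies ‖Δ‖ ≥ ‖M‖⁻¹. -/
open scoped Matrix.Norms.L2Operator

/-- The Neumann series `∑ aᵏ` inverts `1 - a` as soon as `‖a‖ < 1`. -/
theorem one_le_norm_of_not_isUnit_one_sub {R : Type*} [NormedRing R] [HasSummableGeomSeries R]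
    {a : R} (h : ¬IsUnit (1 - a)) : 1 ≤ ‖a‖ :=
  not_lt.mp fun ha => h (Units.oneSub a ha).isUnit

theorem small_gain_necessity {n m : Type*}
    [Fintype n] [Fintype m] [DecidableEq n] [DecidableEq m]
    (M : Matrix n m ℂ) (Δ : Matrix m n ℂ) (h : ¬ IsUnit (1 - M * Δ)) :
    1 ≤ ‖M‖ * ‖Δ‖ :=
  (one_le_norm_of_not_isUnit_one_sub h).trans (Matrix.l2_opNorm_mul M Δ)
end

section
/- Let n and m be nonempty finite types with decidable equality, let M : Matrix n m ℂ and let γ : ℝ with 0 < γ. Then the feedback interconnection is robustly stable against all unstructured uncertainties of size less than 1/γ if and only if the gain of M is at most γ; precisely: (∀ Δ : Matrix m n ℂ, ‖Δ‖ < 1/γ → IsUnit (1 - M * Δ)) ↔ ‖M‖ ≤ γ. (Unstructured small gain theorem at a fixed frequency; the necessity direction requires constructing a destabilizing rank-one Δ from the singular value decomposition of M.) -/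
open scoped Matrix.Norms.L2Operator

/-! Sufficiency is the Neumann series, since `‖M * Δ‖ ≤ ‖M‖ * ‖Δ‖ < 1`. For necessity, if
`‖M‖ > γ` take `x` in the closed unit ball with `‖M x‖ = ‖M‖` (compactness) and put `w = M x`.
The rank-one matrix `Δ = x w* / ‖w‖²` has norm `‖x‖ / ‖w‖ ≤ 1 / ‖M‖ < 1 / γ` and maps `w` to `x`,
so `(1 - M Δ) w = 0` and `1 - M Δ` is singular. -/

section

variable {𝕜 : Type*} [RCLike 𝕜]

open Metric in
theorem ContinuousLinearMap.exists_norm_le_one_norm_apply_eq_opNorm {E F : Type*}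
    [NormedAddCommGroup E] [NormedSpace 𝕜 E] [ProperSpace E] [SeminormedAddCommGroup F]
    [NormedSpace 𝕜 F] (f : E →L[𝕜] F) : ∃ x, ‖x‖ ≤ 1 ∧ ‖f x‖ = ‖f‖ := by
  have hK : IsCompact ((fun x => ‖f x‖) '' closedBall 0 1) :=
    (isCompact_closedBall 0 1).image (by fun_prop)
  obtain ⟨x, hx, hfx⟩ := f.sSup_unitClosedBall_eq_norm ▸
    hK.sSup_mem ((nonempty_closedBall.mpr zero_le_one).image _)
  exact ⟨x, mem_closedBall_zero_iff.mp hx, hfx⟩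

namespace Matrix

variable {m n : Type*} [Fintype n]

theorem not_isUnit_of_mulVec_eq_zero [DecidableEq n] {A : Matrix n n 𝕜} {v : n → 𝕜} (hv : v ≠ 0)
    (hAv : A *ᵥ v = 0) : ¬IsUnit A := fun hA =>
  hv (mulVec_injective_iff_isUnit.mpr hA (hAv.trans (mulVec_zero A).symm))

theorem vecMulVec_star_mulVec_self (x : EuclideanSpace 𝕜 m) (y : EuclideanSpace 𝕜 n) :
    vecMulVec x (star y) *ᵥ y = ((‖y‖ : 𝕜) ^ 2) • x := by
  rw [vecMulVec_mulVec, dotProduct_comm, ← EuclideanSpace.inner_eq_star_dotProduct,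
    inner_self_eq_norm_sq_to_K, op_smul_eq_smul]

variable [Fintype m]

theorem exists_norm_le_one_l2_opNorm_eq [DecidableEq m] (M : Matrix n m 𝕜) :
    ∃ x : EuclideanSpace 𝕜 m, ‖x‖ ≤ 1 ∧ ‖toEuclideanLin M x‖ = ‖M‖ :=
  ((toEuclideanLin.trans LinearMap.toContinuousLinearMap) M).exists_norm_le_one_norm_apply_eq_opNorm

open InnerProductSpace in
theorem l2_opNorm_vecMulVec [DecidableEq n] (x : EuclideanSpace 𝕜 m) (y : EuclideanSpace 𝕜 n) :
    ‖vecMulVec x (star y)‖ = ‖x‖ * ‖y‖ := by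
  rw [← symm_toEuclideanLin_rankOne, l2_opNorm_def, ← LinearMap.coe_toContinuousLinearMap_symm,
    LinearEquiv.trans_apply, LinearEquiv.apply_symm_apply, LinearEquiv.apply_symm_apply,
    norm_rankOne]

theorem exists_l2_opNorm_eq_not_isUnit_one_sub_mul [DecidableEq m] [DecidableEq n]
    (M : Matrix n m 𝕜) (x : EuclideanSpace 𝕜 m) (hMx : toEuclideanLin M x ≠ 0) :
    ∃ Δ : Matrix m n 𝕜, ‖Δ‖ = ‖x‖ / ‖toEuclideanLin M x‖ ∧ ¬IsUnit (1 - M * Δ) := by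
  set w := toEuclideanLin M x
  have hw : 0 < ‖w‖ := norm_pos_iff.mpr hMx
  refine ⟨((‖w‖ : 𝕜) ^ 2)⁻¹ • vecMulVec x (star w), ?_, not_isUnit_of_mulVec_eq_zero (v := w) ?_ ?_⟩
  · rw [norm_smul, l2_opNorm_vecMulVec, norm_inv, norm_pow, RCLike.norm_ofReal, abs_norm]
    field_simp
  · simpa using hMx
  · rw [sub_mulVec, one_mulVec, ← mulVec_mulVec, smul_mulVec, vecMulVec_star_mulVec_self, smul_smul,
      inv_mul_cancel₀ (pow_ne_zero 2 (RCLike.ofReal_ne_zero.mpr hw.ne')), one_smul, sub_eq_zero]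
    rfl

end Matrix

end

theorem unstructured_small_gain_general {n m : Type*}
    [Fintype n] [Fintype m] [DecidableEq n] [DecidableEq m]
    (M : Matrix n m ℂ) (γ : ℝ) (hγ : 0 < γ) :
    (∀ Δ : Matrix m n ℂ, ‖Δ‖ < 1 / γ → IsUnit (1 - M * Δ)) ↔ ‖M‖ ≤ γ := by
  constructor
  · intro hrobust
    by_contra! hM
    obtain ⟨x, hx, hMx⟩ := M.exists_norm_le_one_l2_opNorm_eq
    have hMpos : 0 < ‖M‖ := hγ.trans hM
    obtain ⟨Δ, hΔ, hsing⟩ :=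
      M.exists_l2_opNorm_eq_not_isUnit_one_sub_mul x (norm_pos_iff.mp (hMx ▸ hMpos))
    refine hsing (hrobust Δ ?_)
    calc ‖Δ‖ = ‖x‖ / ‖M‖ := by rw [hΔ, hMx]
      _ ≤ 1 / ‖M‖ := by gcongr
      _ < 1 / γ := by gcongr
  · intro hM Δ hΔ
    refine isUnit_one_sub_of_norm_lt_one ?_
    calc ‖M * Δ‖ ≤ ‖M‖ * ‖Δ‖ := Matrix.l2_opNorm_mul M Δ
      _ < γ * (1 / γ) := mul_lt_mul_of_le_of_lt_of_nonneg_of_pos hM hΔ (norm_nonneg Δ) hγ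
      _ = 1 := mul_one_div_cancel hγ.ne'

theorem unstructured_small_gain {n m : Type*}
    [Fintype n] [Fintype m] [DecidableEq n] [DecidableEq m]
    [Nonempty n] [Nonempty m]
    (M : Matrix n m ℂ) (γ : ℝ) (hγ : 0 < γ) :
    (∀ Δ : Matrix m n ℂ, ‖Δ‖ < 1 / γ → IsUnit (1 - M * Δ)) ↔ ‖M‖ ≤ γ :=
  unstructured_small_gain_general M γ hγ
end

section
/- Let Y be a nonempty finite type (the discretized wall-normal grid), u : Y → (Fin 3 → ℂ) a velocity perturbation field, and M : Matrix ((Fin 3 × Fin 3) × Y) (Fin 3 × Y) ℂ a (discretized) frequency response matrix mapping forcing to velocity gradients. If the largest perturbation magnitude present in the flow satisfies (max over y : Y of Real.sqrt (‖(u y) 0‖² + ‖(u y) 1‖² + ‖(u y) 2‖²)) * ‖M‖ < 1, then the feedback interconnection matrix 1 - M * Matrix.blockDiagonal (fun y => uΞ (u y)) is invertible. (Unstructured finite-amplitude stability criterion: the flow system remains stable whenever the maximal velocity perturbation magnitude is below ‖M‖⁻¹.) -/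
open scoped Matrix.Norms.L2Operator

noncomputable section

/-!
The gain `blockDiagonal (uΞ ∘ u)` acts independently at each grid point, so its L2 operator norm
is at most the largest block norm, and by Cauchy–Schwarz the block `uΞ q`, which contracts `q`
against each row of a velocity gradient, has norm at most `|q|`. Hence
`‖M * blockDiagonal (uΞ ∘ u)‖ ≤ ‖M‖ · max_y |u y| < 1`, and the Neumann series inverts
`1 - M * blockDiagonal (uΞ ∘ u)`.
-/

namespace Matrix

lemma blockDiagonal_mulVec_apply {α m n o : Type*} [NonUnitalNonAssocSemiring α] [Fintype n]
    [Fintype o] [DecidableEq o] (M : o → Matrix m n α) (x : n × o → α) (i : m) (k : o) :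
    (blockDiagonal M *ᵥ x) (i, k) = (M k *ᵥ fun j => x (j, k)) i := by
  simp [mulVec, dotProduct, Fintype.sum_prod_type, blockDiagonal_apply]

variable {𝕜 m n o : Type*} [RCLike 𝕜] [Fintype m] [Fintype n] [DecidableEq n] [Fintype o]

lemma l2_opNorm_le_of_sum_norm_sq_mulVec_le {A : Matrix m n 𝕜} {C : ℝ} (hC : 0 ≤ C)
    (h : ∀ x : n → 𝕜, ∑ i, ‖(A *ᵥ x) i‖ ^ 2 ≤ C ^ 2 * ∑ j, ‖x j‖ ^ 2) : ‖A‖ ≤ C := by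
  rw [l2_opNorm_def]
  refine ContinuousLinearMap.opNorm_le_bound _ hC fun x => ?_
  refine (sq_le_sq₀ (norm_nonneg _) (by positivity)).mp ?_
  rw [mul_pow, EuclideanSpace.norm_sq_eq, EuclideanSpace.norm_sq_eq]
  exact h x

lemma sum_norm_sq_mulVec_le (A : Matrix m n 𝕜) (x : n → 𝕜) :
    ∑ i, ‖(A *ᵥ x) i‖ ^ 2 ≤ ‖A‖ ^ 2 * ∑ j, ‖x j‖ ^ 2 := by
  have h := pow_le_pow_left₀ (norm_nonneg _) (A.l2_opNorm_mulVec (WithLp.toLp 2 x)) 2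
  rwa [mul_pow, EuclideanSpace.norm_sq_eq, EuclideanSpace.norm_sq_eq] at h

lemma l2_opNorm_blockDiagonal_le [DecidableEq o] {M : o → Matrix m n 𝕜} {C : ℝ} (hC : 0 ≤ C)
    (h : ∀ k, ‖M k‖ ≤ C) : ‖blockDiagonal M‖ ≤ C := by
  refine l2_opNorm_le_of_sum_norm_sq_mulVec_le hC fun x => ?_
  calc ∑ p, ‖(blockDiagonal M *ᵥ x) p‖ ^ 2
      = ∑ k, ∑ i, ‖(M k *ᵥ fun j => x (j, k)) i‖ ^ 2 := by
        rw [Fintype.sum_prod_type, Finset.sum_comm]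
        simp only [blockDiagonal_mulVec_apply]
    _ ≤ ∑ k, C ^ 2 * ∑ j, ‖x (j, k)‖ ^ 2 := by
        gcongr with k
        exact ((M k).sum_norm_sq_mulVec_le _).trans (by gcongr; exact h k)
    _ = C ^ 2 * ∑ p, ‖x p‖ ^ 2 := by
        rw [← Finset.mul_sum, Fintype.sum_prod_type, Finset.sum_comm]

end Matrix

open Matrix

lemma uΞ_mulVec_apply (q : Fin 3 → ℂ) (x : Fin 3 × Fin 3 → ℂ) (i : Fin 3) :
    (uΞ q *ᵥ x) i = -∑ j, q j * x (i, j) := by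
  simp [mulVec, dotProduct, Fintype.sum_prod_type, uΞ]

lemma norm_uΞ_le (q : Fin 3 → ℂ) : ‖uΞ q‖ ≤ √(∑ j, ‖q j‖ ^ 2) := by
  refine l2_opNorm_le_of_sum_norm_sq_mulVec_le (Real.sqrt_nonneg _) fun x => ?_
  calc ∑ i, ‖(uΞ q *ᵥ x) i‖ ^ 2
      ≤ ∑ i, (∑ j, ‖q j‖ ^ 2) * ∑ j, ‖x (i, j)‖ ^ 2 := by
        gcongr with i
        rw [uΞ_mulVec_apply, norm_neg]
        calc _ ≤ (∑ j, ‖q j‖ * ‖x (i, j)‖) ^ 2 := by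
              gcongr
              exact (norm_sum_le _ _).trans_eq (by simp only [norm_mul])
          _ ≤ _ := Finset.sum_mul_sq_le_sq_mul_sq _ _ _
    _ = √(∑ j, ‖q j‖ ^ 2) ^ 2 * ∑ p, ‖x p‖ ^ 2 := by
        rw [Real.sq_sqrt (by positivity), ← Finset.mul_sum, Fintype.sum_prod_type]

theorem unstructured_finite_amplitude_stability {Y : Type*}
    [Fintype Y] [DecidableEq Y] [Nonempty Y]
    (u : Y → (Fin 3 → ℂ))
    (M : Matrix ((Fin 3 × Fin 3) × Y) (Fin 3 × Y) ℂ)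
    (h : (Finset.univ.sup' Finset.univ_nonempty
          (fun y => Real.sqrt (‖u y 0‖ ^ 2 + ‖u y 1‖ ^ 2 + ‖u y 2‖ ^ 2))) * ‖M‖ < 1) :
    IsUnit (1 - M * Matrix.blockDiagonal (fun y => uΞ (u y))) := by
  set S := Finset.univ.sup' Finset.univ_nonempty
    (fun y => Real.sqrt (‖u y 0‖ ^ 2 + ‖u y 1‖ ^ 2 + ‖u y 2‖ ^ 2))
  have hblock (y : Y) : ‖uΞ (u y)‖ ≤ S :=
    (norm_uΞ_le (u y)).trans_eq (by rw [Fin.sum_univ_three]) |>.trans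
      (Finset.le_sup' _ (Finset.mem_univ y))
  have hS : 0 ≤ S := (norm_nonneg _).trans (hblock (Classical.arbitrary Y))
  have hsmall : ‖M * blockDiagonal (fun y => uΞ (u y))‖ < 1 := calc
    _ ≤ ‖M‖ * ‖blockDiagonal (fun y => uΞ (u y))‖ := l2_opNorm_mul _ _
    _ ≤ ‖M‖ * S := by gcongr; exact l2_opNorm_blockDiagonal_le hS hblock
    _ < 1 := by rwa [mul_comm]
  exact (Units.oneSub _ hsmall).isUnit
end
end
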